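/- arXiv:2310.01793 — 2 statements merged into one kernel-verified Lean document; each statement's English description precedes it below -/
import Mathlib

section
/- Let G be a finite group and H a non-trivial proper normal subgroup of G, and let k be an odd integer with 1 ≤ k ≤ |H|. Then H is a (0,k)-regular set of G if and only if for every g ∈ G with g² ∈ H there exists h ∈ H such that (gh)² = e. -/
open Set

/-- An `(a,b)`-regular set in a graph: a nonempty proper subset `D` of the vertex set such
that every vertex in `D` has exactly `a` neighbours in `D` and every vertex outside `D`
has exactly `b` neighbours in `D`. -/
def IsRegularSet {V : Type*} (G : SimpleGraph V) (D : Set V) (a b : ℕ) : Prop :=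
  D.Nonempty ∧ D ≠ Set.univ ∧
    (∀ v ∈ D, {u | G.Adj v u ∧ u ∈ D}.ncard = a) ∧
    (∀ v ∉ D, {u | G.Adj v u ∧ u ∈ D}.ncard = b)

/-- The Cayley graph of a group with connection set `S`: `x ~ y` iff `y * x⁻¹ ∈ S`
(stated symmetrically; when `S` is inverse-closed and `1 ∉ S` this is the usual notion). -/
def cayley {G : Type*} [Group G] (S : Set G) : SimpleGraph G where
  Adj x y := x ≠ y ∧ y * x⁻¹ ∈ S ∧ x * y⁻¹ ∈ S
  symm := ⟨fun x y h => ⟨h.1.symm, h.2.2, h.2.1⟩⟩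
  loopless := ⟨fun x h => h.1 rfl⟩

/-- `D` is a `(0,k)`-regular set of the group `G`: it is a `(0,k)`-regular set in some
Cayley graph of `G` (with inverse-closed connection set avoiding the identity). -/
def IsRegularSetOfGroup (G : Type*) [Group G] (D : Set G) (k : ℕ) : Prop :=
  ∃ S : Set G, (1 : G) ∉ S ∧ (∀ s ∈ S, s⁻¹ ∈ S) ∧ IsRegularSet (cayley S) D 0 k

/-! In `cayley S` the neighbours of `v` lying in `H` are the translates by `v` of `S ∩ H v⁻¹`,
so `H` is `(0,k)`-regular exactly when `S` misses `H` and meets every other coset of `H` in `k`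
elements. If `g² ∈ H` but `g ∉ H`, the coset `gH` is its own inverse, hence so is `S ∩ gH`; an
inverse-closed set of odd size contains some `x = gh` with `x⁻¹ = x`. Conversely, pick `k`-subsets
of the nontrivial cosets compatibly with inversion: on a self-inverse coset the hypothesis provides
an involution, and the rest of the coset splits into pairs `{x, x⁻¹}` and further involutions, so an
inverse-closed subset of any size `k ≤ |H|` exists. -/

open Pointwise

namespace Set

variable {α : Type*} [InvolutiveInv α] {s : Set α}

theorem inv_eq_self_iff_forall_inv_mem : s⁻¹ = s ↔ ∀ x ∈ s, x⁻¹ ∈ s := by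
  rw [inv_eq_self_iff_inv_subset, inv_subset]
  exact ⟨fun h x hx => h hx, fun h x hx => h x hx⟩

theorem exists_inv_eq_self_of_odd_ncard (hs : s⁻¹ = s) (hodd : Odd s.ncard) :
    ∃ x ∈ s, x⁻¹ = x := by
  classical
  have : Fintype s := (finite_of_ncard_pos hodd.pos).fintype
  let f : Function.End s := fun x => ⟨x.1⁻¹, inv_eq_self_iff_forall_inv_mem.1 hs _ x.2⟩
  have hf : f ^ 2 ^ 1 = 1 := by
    rw [pow_one, pow_two]; funext x; exact Subtype.ext (inv_inv _)
  obtain ⟨⟨x, hx⟩, hfx⟩ : Nonempty f.fixedPoints := by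
    have hmod := Equiv.Perm.card_fixedPoints_modEq (p := 2) hf
    rw [ncard_eq_toFinset_card', toFinset_card, Nat.odd_iff] at hodd
    rw [← Fintype.card_pos_iff]
    unfold Nat.ModEq at hmod
    omega
  exact ⟨x, hx, congrArg Subtype.val hfx⟩

theorem exists_subset_inv_eq_self_ncard_eq_two (hs : s⁻¹ = s) (h2 : 2 ≤ s.ncard) :
    ∃ p ⊆ s, p⁻¹ = p ∧ p.ncard = 2 := by
  by_cases h : ∃ x ∈ s, x⁻¹ ≠ x
  · obtain ⟨x, hx, hxx⟩ := h
    refine ⟨{x, x⁻¹}, pair_subset hx (inv_eq_self_iff_forall_inv_mem.1 hs x hx), ?_,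
      ncard_pair hxx.symm⟩
    rw [inv_insert, inv_singleton, inv_inv, pair_comm]
  · push Not at h
    obtain ⟨x, hx, y, hy, hxy⟩ := (one_lt_ncard (finite_of_ncard_pos (by omega))).1 h2
    refine ⟨{x, y}, pair_subset hx hy, ?_, ncard_pair hxy⟩
    rw [inv_insert, inv_singleton, h x hx, h y hy]

theorem exists_subset_inv_eq_self_ncard_eq (hs : s⁻¹ = s) {k : ℕ} (hk : k ≤ s.ncard)
    (hfix : Odd k → ∃ x ∈ s, x⁻¹ = x) : ∃ t ⊆ s, t⁻¹ = t ∧ t.ncard = k := by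
  induction k using Nat.twoStepInduction with
  | zero => exact ⟨∅, empty_subset s, inv_empty, ncard_empty α⟩
  | one =>
    obtain ⟨x, hx, hxx⟩ := hfix odd_one
    exact ⟨{x}, singleton_subset_iff.2 hx, by rw [inv_singleton, hxx], ncard_singleton x⟩
  | more n ih _ =>
    obtain ⟨t, hts, ht, htn⟩ :=
      ih (by omega) fun hn => hfix (by simpa [parity_simps] using hn)
    have hfin : s.Finite := finite_of_ncard_pos (by omega)
    obtain ⟨p, hp, hpinv, hp2⟩ := exists_subset_inv_eq_self_ncard_eq_two (s := s \ t)
      (by rw [sdiff_eq, inter_inv, compl_inv, hs, ht])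
      (by rw [ncard_sdiff' hts hfin]; omega)
    refine ⟨t ∪ p, union_subset hts (hp.trans sdiff_subset), by rw [union_inv, ht, hpinv], ?_⟩
    rw [ncard_union_eq (disjoint_of_subset_right hp disjoint_sdiff_right)
      (hfin.subset hts) (hfin.subset (hp.trans sdiff_subset)), htn, hp2]

end Set

theorem exists_inv_equivariant_choice {ι β : Type*} [InvolutiveInv ι] [InvolutiveInv β]
    {P : ι → β → Prop} (hP : ∀ i b, P i b → P i⁻¹ b⁻¹)
    (h : ∀ i, ∃ b, P i b ∧ (i⁻¹ = i → b⁻¹ = b)) :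
    ∃ T : ι → β, (∀ i, P i (T i)) ∧ ∀ i, T i⁻¹ = (T i)⁻¹ := by
  classical
  choose B hPB hB using h
  -- On each orbit `{i, i⁻¹}` keep the choice made at the smaller index and invert it at the other.
  obtain ⟨_, -⟩ := exists_wellFoundedLT ι
  refine ⟨fun i => if i ≤ i⁻¹ then B i else (B i⁻¹)⁻¹, fun i => ?_, fun i => ?_⟩
  · dsimp only
    split_ifs
    · exact hPB i
    · simpa using hP _ _ (hPB i⁻¹)
  rcases lt_trichotomy i i⁻¹ with h | h | h
  · simp [h.le, not_le.2 h]
  · simp [← h, hB i h.symm]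
  · simp [h.le, not_le.2 h]

section Group

variable {G : Type*} [Group G] {S : Set G}

theorem cayley_adj_iff (hS1 : (1 : G) ∉ S) (hS : S⁻¹ = S) {x y : G} :
    (cayley S).Adj x y ↔ y * x⁻¹ ∈ S := by
  refine ⟨fun h => h.2.1, fun h => ⟨?_, h, ?_⟩⟩
  · rintro rfl
    exact hS1 (by simpa using h)
  · rw [← hS, Set.mem_inv, mul_inv_rev, inv_inv]
    exact h

theorem ncard_setOf_cayley_adj_and_mem (hS1 : (1 : G) ∉ S) (hS : S⁻¹ = S) (v : G) (D : Set G) :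
    {u | (cayley S).Adj v u ∧ u ∈ D}.ncard = (S ∩ (· * v) ⁻¹' D).ncard := by
  have : {u | (cayley S).Adj v u ∧ u ∈ D} = (· * v) '' (S ∩ (· * v) ⁻¹' D) := by
    ext u
    simp only [cayley_adj_iff hS1 hS, Set.mem_ofPred_eq, Set.mem_image, Set.mem_inter_iff,
      Set.mem_preimage]
    exact ⟨fun h => ⟨u * v⁻¹, by simpa using h⟩, by rintro ⟨w, hw, rfl⟩; simpa using hw⟩
  rw [this, Set.ncard_image_of_injective _ (mul_left_injective v)]

variable {H : Subgroup G}

theorem QuotientGroup.ncard_preimage_mk_singleton (q : G ⧸ H) :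
    (QuotientGroup.mk ⁻¹' {q} : Set G).ncard = Nat.card H := by
  rw [← Nat.card_coe_set_eq, QuotientGroup.card_preimage_mk, Nat.card_coe_set_eq,
    ncard_singleton, mul_one]

variable [H.Normal]

theorem QuotientGroup.preimage_mk_singleton_inv (q : G ⧸ H) :
    (QuotientGroup.mk ⁻¹' {q} : Set G)⁻¹ = QuotientGroup.mk ⁻¹' {q⁻¹} := by
  ext x
  simp [inv_eq_iff_eq_inv]

theorem QuotientGroup.preimage_mul_right_eq_preimage_mk_inv (v : G) :
    (· * v) ⁻¹' (H : Set G) = QuotientGroup.mk ⁻¹' {(v : G ⧸ H)⁻¹} := by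
  ext w
  simp [← QuotientGroup.eq_one_iff, eq_inv_iff_mul_eq_one]

theorem isRegularSet_cayley_normal_iff [Finite G] (hS1 : (1 : G) ∉ S) (hS : S⁻¹ = S)
    (htop : H ≠ ⊤) (k : ℕ) : IsRegularSet (cayley S) H 0 k ↔
      Disjoint S H ∧ ∀ q : G ⧸ H, q ≠ 1 → (S ∩ QuotientGroup.mk ⁻¹' {q}).ncard = k := by
  have hdisj : Disjoint S H ↔ (S ∩ QuotientGroup.mk ⁻¹' {(1 : G ⧸ H)}).ncard = 0 := by
    rw [ncard_eq_zero, ← QuotientGroup.mk_one, QuotientGroup.preimage_mk_one,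
      disjoint_iff_inter_eq_empty]
  simp only [IsRegularSet, ncard_setOf_cayley_adj_and_mem hS1 hS,
    QuotientGroup.preimage_mul_right_eq_preimage_mk_inv]
  constructor
  · rintro ⟨-, -, hin, hout⟩
    refine ⟨hdisj.2 (by simpa using hin 1 H.one_mem), fun q hq => ?_⟩
    obtain ⟨v, hv⟩ := QuotientGroup.mk_surjective q⁻¹
    have hvH : v ∉ H := by rwa [← QuotientGroup.eq_one_iff, hv, inv_eq_one]
    simpa [hv] using hout v hvH
  · rintro ⟨hSH, hout⟩
    refine ⟨⟨1, H.one_mem⟩, mt Subgroup.coe_eq_univ.1 htop, fun v hv => ?_, fun v hv => ?_⟩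
    · rw [(QuotientGroup.eq_one_iff v).2 hv, inv_one]
      exact hdisj.1 hSH
    · exact hout _ (by rwa [inv_ne_one, Ne, QuotientGroup.eq_one_iff])

theorem isRegularSetOfGroup_normal_iff [Finite G] (htop : H ≠ ⊤) (k : ℕ) :
    IsRegularSetOfGroup G H k ↔ ∃ S : Set G, S⁻¹ = S ∧ Disjoint S H ∧
      ∀ q : G ⧸ H, q ≠ 1 → (S ∩ QuotientGroup.mk ⁻¹' {q}).ncard = k := by
  simp only [IsRegularSetOfGroup, ← inv_eq_self_iff_forall_inv_mem]
  refine exists_congr fun S =>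
    ⟨fun ⟨hS1, hS, hreg⟩ => ⟨hS, (isRegularSet_cayley_normal_iff hS1 hS htop k).1 hreg⟩,
      fun ⟨hS, hSH, hcard⟩ => ?_⟩
  have hS1 : (1 : G) ∉ S := fun h => hSH.ne_of_mem h H.one_mem rfl
  exact ⟨hS1, hS, (isRegularSet_cayley_normal_iff hS1 hS htop k).2 ⟨hSH, hcard⟩⟩

theorem exists_mul_sq_eq_one_of_odd_ncard (hS : S⁻¹ = S) {g : G} (hg : g ^ 2 ∈ H)
    (hodd : Odd (S ∩ QuotientGroup.mk ⁻¹' {(g : G ⧸ H)}).ncard) : ∃ h ∈ H, (g * h) ^ 2 = 1 := by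
  have hq : (g : G ⧸ H)⁻¹ = g := by
    rw [inv_eq_iff_mul_eq_one, ← QuotientGroup.mk_mul, ← sq, QuotientGroup.eq_one_iff]
    exact hg
  obtain ⟨x, ⟨-, hx⟩, hxx⟩ := exists_inv_eq_self_of_odd_ncard
    (by rw [inter_inv, hS, QuotientGroup.preimage_mk_singleton_inv, hq]) hodd
  refine ⟨g⁻¹ * x, ?_, by rw [mul_inv_cancel_left, sq]; nth_rw 1 [← hxx]; exact inv_mul_cancel x⟩
  rw [← QuotientGroup.eq_one_iff, QuotientGroup.mk_mul, QuotientGroup.mk_inv, hx, inv_mul_cancel]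

theorem exists_inv_eq_self_mem_preimage_mk
    (hsol : ∀ g : G, g ^ 2 ∈ H → ∃ h ∈ H, (g * h) ^ 2 = 1) {q : G ⧸ H} (hq : q⁻¹ = q) :
    ∃ x ∈ QuotientGroup.mk ⁻¹' {q}, x⁻¹ = x := by
  obtain ⟨g, rfl⟩ := QuotientGroup.mk_surjective q
  obtain ⟨h, hh, hgh⟩ := hsol g (by
    rw [← QuotientGroup.eq_one_iff, sq, QuotientGroup.mk_mul]
    nth_rw 1 [← hq]
    exact inv_mul_cancel _)
  refine ⟨g * h, ?_, inv_eq_of_mul_eq_one_left (by rwa [sq] at hgh)⟩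
  simp [(QuotientGroup.eq_one_iff h).2 hh]

theorem exists_inv_eq_self_disjoint_ncard_inter_preimage_mk_eq [Finite G]
    (hsol : ∀ g : G, g ^ 2 ∈ H → ∃ h ∈ H, (g * h) ^ 2 = 1) {k : ℕ} (hkH : k ≤ Nat.card H) :
    ∃ S : Set G, S⁻¹ = S ∧ Disjoint S H ∧
      ∀ q : G ⧸ H, q ≠ 1 → (S ∩ QuotientGroup.mk ⁻¹' {q}).ncard = k := by
  obtain ⟨T, hT, hTinv⟩ := exists_inv_equivariant_choice
    (P := fun (q : G ⧸ H) (t : Set G) => t ⊆ QuotientGroup.mk ⁻¹' {q} ∧ t.ncard = k)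
    (fun q t ht => ⟨by rw [← QuotientGroup.preimage_mk_singleton_inv, inv_subset_inv]; exact ht.1,
      by rw [ncard_inv]; exact ht.2⟩)
    fun q => by
      rw [← QuotientGroup.ncard_preimage_mk_singleton q] at hkH
      by_cases hq : q⁻¹ = q
      · obtain ⟨t, hts, htinv, htk⟩ := exists_subset_inv_eq_self_ncard_eq
          (by rw [QuotientGroup.preimage_mk_singleton_inv, hq]) hkH
          fun _ => exists_inv_eq_self_mem_preimage_mk hsol hq
        exact ⟨t, ⟨hts, htk⟩, fun _ => htinv⟩
      · obtain ⟨t, hts, htk⟩ := exists_subset_card_eq hkH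
        exact ⟨t, ⟨hts, htk⟩, fun h => absurd h hq⟩
  refine ⟨{x | (x : G ⧸ H) ≠ 1 ∧ x ∈ T x}, ?_, ?_, fun q hq => ?_⟩
  · ext x
    simp [hTinv]
  · rw [disjoint_left]
    rintro x ⟨hx, -⟩ hxH
    exact hx ((QuotientGroup.eq_one_iff x).2 hxH)
  · convert (hT q).2 using 2
    ext x
    refine ⟨by rintro ⟨⟨-, hx⟩, rfl⟩; exact hx, fun hx => ?_⟩
    have hxq : (x : G ⧸ H) = q := (hT q).1 hx
    exact ⟨⟨hxq ▸ hq, hxq ▸ hx⟩, hxq⟩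

end Group

theorem stmt11_general {G : Type*} [Group G] [Fintype G] (H : Subgroup G) [H.Normal]
    (htop : H ≠ ⊤) (k : ℕ) (hkH : k ≤ Nat.card H)
    (hko : Odd k) :
    IsRegularSetOfGroup G (H : Set G) k ↔
      ∀ g : G, g ^ 2 ∈ H → ∃ h ∈ H, (g * h) ^ 2 = 1 := by
  rw [isRegularSetOfGroup_normal_iff htop]
  refine ⟨?_, fun hsol => exists_inv_eq_self_disjoint_ncard_inter_preimage_mk_eq hsol hkH⟩
  rintro ⟨S, hS, -, hcard⟩ g hg
  by_cases hgH : g ∈ H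
  · exact ⟨g⁻¹, H.inv_mem hgH, by simp⟩
  · refine exists_mul_sq_eq_one_of_odd_ncard hS hg ?_
    rwa [hcard _ (by rwa [Ne, QuotientGroup.eq_one_iff])]

theorem stmt11 {G : Type*} [Group G] [Fintype G] (H : Subgroup G) [H.Normal]
    (hbot : H ≠ ⊥) (htop : H ≠ ⊤) (k : ℕ) (hk1 : 1 ≤ k) (hkH : k ≤ Nat.card H)
    (hko : Odd k) :
    IsRegularSetOfGroup G (H : Set G) k ↔
      ∀ g : G, g ^ 2 ∈ H → ∃ h ∈ H, (g * h) ^ 2 = 1 :=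
  stmt11_general H htop k hkH hko
end

section
/- Let Q₄ₙ = ⟨a, b | aⁿ = b², a^{2n} = e, b⁻¹ab = a⁻¹⟩ be the generalized quaternion group of order 4n ≥ 8, and let H be a proper subgroup of Q₄ₙ. For any odd integer k with 1 ≤ k ≤ |H|, H is a (0,k)-regular set of Q₄ₙ if and only if either H = ⟨a^t⟩ with t dividing 2n and 2n/t odd, or H = ⟨a^t, a^s b⟩ with t an odd divisor of 2n and 0 ≤ s ≤ t−1. -/
open Set

/-!
Write the elements of `Q₄ₙ` as rotations `a i` and reflections `xa i`, `i : ZMod (2 * n)`.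
A subgroup `H` is `(0,k)`-regular exactly when some inverse-closed `S` disjoint from `H` meets
every right coset `H x ≠ H` in `k` points. Every subgroup is `⟨a ^ d⟩` or `⟨a ^ d, xa c⟩`, so
membership is read off residues modulo `d`.

Necessity: if `x ∉ H`, `x H x ⊆ H` and `H` contains the unique involution `a n`, then
`u ↦ x⁻¹ u⁻¹ x⁻¹` pairs off `S ∩ H x`, forcing `k` to be even. Use `x = xa 0` for `⟨a ^ d⟩`
with `2n / d` even and `x = a (d / 2)` for `⟨a ^ d, xa c⟩` with `d` even.

Sufficiency: `S` is built class by class modulo `t`. Classes swapped by the involution that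
inversion induces (negation on rotations, `i ↦ n + i` on reflections) receive `k` points in one
class of each pair and their images; for `⟨a ^ t⟩` the one self-paired class `n + ⟨t⟩` receives
a symmetric progression around the involution `n`. For `⟨a ^ t, xa c⟩` with `t` odd, each coset
splits into a rotation class and a reflection class; when `k > |⟨a ^ t⟩|` all reflections
outside `H` are added.
-/

theorem Set.even_ncard_of_involution {α : Type*} {s : Set α} (hs : s.Finite) (f : α → α)
    (hmem : ∀ x ∈ s, f x ∈ s) (hinv : ∀ x ∈ s, f (f x) = x) (hne : ∀ x ∈ s, f x ≠ x) :
    Even s.ncard := by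
  rw [Set.ncard_eq_toFinset_card s hs, ← ZMod.natCast_eq_zero_iff_even, Finset.card_eq_sum_ones,
    Nat.cast_sum]
  refine Finset.sum_involution (fun x _ => f x) (fun _ _ => by decide) (fun x hx _ => ?_)
    (fun x hx => ?_) (fun x hx => ?_)
  · exact hne x (by simpa using hx)
  · simpa using hmem x (by simpa using hx)
  · exact hinv x (by simpa using hx)

theorem Function.Involutive.exists_transversal {β : Type*} {g : β → β} (hg : Involutive g) :
    ∃ R : Set β, ∀ r, r ∈ R ↔ g r ≠ r ∧ g r ∉ R := by
  let _ := IsWellOrder.linearOrder (WellOrderingRel (α := β))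
  refine ⟨{r | r < g r}, fun r => ?_⟩
  simp only [Set.mem_ofPred_eq, hg r, not_lt]
  exact ⟨fun h => ⟨h.ne', h.le⟩, fun ⟨hne, hle⟩ => lt_of_le_of_ne hle hne.symm⟩

/-- Take `j` points over one fibre of each two-element `g`-orbit, together with their
`f`-images. -/
theorem exists_invariant_ncard_inter_fiber {α β : Type*} (ρ : α → β) {f : α → α}
    (hf : Function.Involutive f) {g : β → β} (hg : Function.Involutive g)
    (hρ : ∀ x, ρ (f x) = g (ρ x)) {j : ℕ} (hj : ∀ r, j ≤ (ρ ⁻¹' {r}).ncard) :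
    ∃ T : Set α, (∀ x ∈ T, f x ∈ T) ∧ (∀ x ∈ T, g (ρ x) ≠ ρ x) ∧
      ∀ r, g r ≠ r → (T ∩ ρ ⁻¹' {r}).ncard = j := by
  choose F hF hFj using fun r => Set.exists_subset_card_eq (hj r)
  obtain ⟨R, hR⟩ := hg.exists_transversal
  set U : Set α := {x | ρ x ∈ R ∧ x ∈ F (ρ x)}
  have hU : ∀ r ∈ R, U ∩ ρ ⁻¹' {r} = F r := fun r hr => by
    ext x
    constructor
    · rintro ⟨⟨-, hx⟩, rfl : ρ x = r⟩
      exact hx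
    · intro hx
      have hxr : ρ x = r := hF r hx
      exact ⟨⟨hxr ▸ hr, hxr ▸ hx⟩, hxr⟩
  refine ⟨U ∪ f ⁻¹' U, ?_, ?_, fun r hr => ?_⟩
  · rintro x (hx | hx)
    · exact Or.inr (by rwa [Set.mem_preimage, hf x])
    · exact Or.inl hx
  · rintro x (hx | hx)
    · exact ((hR _).1 hx.1).1
    · have := ((hR _).1 hx.1).1
      rw [hρ, hg] at this
      exact this.symm
  have hfiber : f ⁻¹' (ρ ⁻¹' {g r}) = ρ ⁻¹' {r} := by
    ext x
    simp [hρ, hg.injective.eq_iff]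
  by_cases hrR : r ∈ R
  · have hgr : g r ∉ R := ((hR r).1 hrR).2
    have hempty : f ⁻¹' U ∩ ρ ⁻¹' {r} = ∅ :=
      Set.eq_empty_of_forall_notMem fun x ⟨hx, (hxr : ρ x = r)⟩ => hgr (hxr ▸ hρ x ▸ hx.1)
    rw [Set.union_inter_distrib_right, hU r hrR, hempty, Set.union_empty, hFj]
  · have hgr : g r ∈ R := by
      by_contra hgr
      exact hrR ((hR r).2 ⟨hr, hgr⟩)
    have hempty : U ∩ ρ ⁻¹' {r} = ∅ :=
      Set.eq_empty_of_forall_notMem fun x ⟨hx, (hxr : ρ x = r)⟩ => hrR (hxr ▸ hx.1)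
    rw [Set.union_inter_distrib_right, hempty, Set.empty_union, ← hfiber, ← Set.preimage_inter,
      hU _ hgr, Set.ncard_preimage_of_injective_subset_range hf.injective
        (by simp [hf.surjective.range_eq]), hFj]

theorem ncard_preimage_inter_fiber {α β : Type*} {ρ : α → β} {φ : α → α}
    (hφ : φ.Bijective) {ψ : β → β} (hψ : ψ.Injective) (hρ : ∀ x, ρ (φ x) = ψ (ρ x))
    (A : Set α) (r : β) : (φ ⁻¹' A ∩ ρ ⁻¹' {r}).ncard = (A ∩ ρ ⁻¹' {ψ r}).ncard := by
  have h : φ ⁻¹' A ∩ ρ ⁻¹' {r} = φ ⁻¹' (A ∩ ρ ⁻¹' {ψ r}) := by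
    ext x
    simp [hρ, hψ.eq_iff]
  rw [h, Set.ncard_preimage_of_injective_subset_range hφ.1 (by simp [hφ.2.range_eq])]

theorem ncard_fiber_eq_ncard_ker {G M F : Type*} [AddGroup G] [AddGroup M] [FunLike F G M]
    [AddMonoidHomClass F G M] {ρ : F} (hρ : Function.Surjective ρ) (r : M) :
    (ρ ⁻¹' {r}).ncard = (ρ ⁻¹' {0}).ncard := by
  obtain ⟨g, rfl⟩ := hρ r
  simpa using (ncard_preimage_inter_fiber (φ := (· + g)) (ψ := (· + ρ g))
    (AddGroup.addRight_bijective g) (add_left_injective _) (fun x => map_add ρ x g) Set.univ 0).symm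

/-- The witness is the progression `c + z • g`, `|z| ≤ (k - 1) / 2`. -/
theorem exists_neg_invariant_ncard_eq {G : Type*} [AddCommGroup G] {c : G} (hc : -c = c) (g : G)
    {k : ℕ} (hk : Odd k) (hkg : k ≤ addOrderOf g) :
    ∃ C : Set G, (∀ x ∈ C, -x ∈ C) ∧ (∀ x ∈ C, ∃ z : ℤ, x = c + z • g) ∧ C.ncard = k := by
  obtain ⟨e, rfl⟩ := hk
  refine ⟨(fun z : ℤ => c + z • g) '' Set.Icc (-e : ℤ) e, ?_, ?_, ?_⟩
  · rintro _ ⟨z, hz, rfl⟩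
    exact ⟨-z, ⟨by linarith [hz.2], by linarith [hz.1]⟩, by simp only [neg_zsmul, neg_add, hc]⟩
  · rintro _ ⟨z, -, rfl⟩
    exact ⟨z, rfl⟩
  · have hinj : Set.InjOn (fun z : ℤ => c + z • g) (Set.Icc (-e : ℤ) e) := by
      intro z₁ hz₁ z₂ hz₂ h
      have hdvd : (addOrderOf g : ℤ) ∣ z₁ - z₂ := by
        rw [addOrderOf_dvd_iff_zsmul_eq_zero, sub_zsmul, add_left_cancel h, add_neg_cancel]
      have hkg' : ((2 * e + 1 : ℕ) : ℤ) ≤ addOrderOf g := by exact_mod_cast hkg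
      have hlt : |z₁ - z₂| < addOrderOf g := by
        rw [abs_lt]
        constructor <;> push_cast at hkg' <;> linarith [hz₁.1, hz₁.2, hz₂.1, hz₂.2]
      exact sub_eq_zero.1 (Int.eq_zero_of_abs_lt_dvd hdvd hlt)
    rw [hinj.ncard_image, ← Finset.coe_Icc, Set.ncard_coe_finset, Int.card_Icc]
    omega

theorem ZMod.neg_eq_self_iff_of_two_mul {N : ℕ} [NeZero N] (r : ZMod (2 * N)) :
    -r = r ↔ r = 0 ∨ r = N := by
  have hN : ((N : ℕ) : ZMod (2 * N)).val = N := ZMod.val_cast_of_lt (by have := NeZero.pos N; omega)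
  rw [ZMod.neg_eq_self_iff]
  refine or_congr_right ⟨fun h => ?_, fun h => by rw [h, hN]⟩
  exact ZMod.val_injective _ (by omega)

theorem ZMod.eq_zero_of_neg_eq_self {t : ℕ} (ht : Odd t) {r : ZMod t} (h : -r = r) : r = 0 := by
  rcases (ZMod.neg_eq_self_iff r).1 h with h | h
  · exact h
  · exact absurd ⟨r.val, by omega⟩ (Nat.not_even_iff_odd.2 ht)

theorem ZMod.natCast_ne_zero_of_odd_two_mul_div {n t : ℕ} (hodd : Odd (2 * n / t)) :
    (n : ZMod t) ≠ 0 := by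
  rw [Ne, CharP.cast_eq_zero_iff (ZMod t) t]
  rintro ⟨q, rfl⟩
  have ht : 0 < t := Nat.pos_of_ne_zero fun h => by simp [h] at hodd
  rw [← mul_assoc, mul_comm 2 t, mul_assoc, Nat.mul_div_cancel_left _ ht] at hodd
  exact Nat.not_even_iff_odd.2 hodd (even_two_mul q)

theorem ZMod.neg_eq_self_iff_of_odd_two_mul_div {n t : ℕ} (ht : t ∣ 2 * n)
    (hodd : Odd (2 * n / t)) (r : ZMod t) : -r = r ↔ r = 0 ∨ r = n := by
  obtain ⟨m, hm⟩ := ht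
  have ht0 : 0 < t := Nat.pos_of_ne_zero fun h => by simp [h] at hodd
  rw [hm, Nat.mul_div_cancel_left m ht0] at hodd
  obtain ⟨t', rfl⟩ : 2 ∣ t := by
    have : Even (t * m) := hm ▸ even_two_mul n
    exact even_iff_two_dvd.1 ((Nat.even_mul.1 this).resolve_right (Nat.not_even_iff_odd.2 hodd))
  obtain ⟨q, rfl⟩ := hodd
  have : NeZero t' := ⟨by rintro rfl; simp at ht0⟩
  have hn : n = t' + 2 * t' * q := by linarith
  rw [hn, Nat.cast_add, Nat.cast_mul, ZMod.natCast_self, zero_mul, add_zero]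
  exact ZMod.neg_eq_self_iff_of_two_mul r

theorem cayley_adj_iff_s16 {G : Type*} [Group G] {S : Set G} (hS1 : (1 : G) ∉ S)
    (hS : ∀ s ∈ S, s⁻¹ ∈ S) {v u : G} :
    (cayley S).Adj v u ↔ u * v⁻¹ ∈ S := by
  refine ⟨fun h => h.2.1, fun h => ⟨?_, h, by simpa using hS _ h⟩⟩
  rintro rfl
  exact hS1 (by simpa using h)

namespace Subgroup

variable {G : Type*} [Group G]

/-- `{u ∈ H | u * x ∈ S}` is `S ∩ H x` translated back into `H`. -/
def IsRegularConnectionSet (H : Subgroup G) (S : Set G) (k : ℕ) : Prop :=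
  (∀ s ∈ S, s⁻¹ ∈ S) ∧ Disjoint (H : Set G) S ∧ ∀ x ∉ H, {u | u ∈ H ∧ u * x ∈ S}.ncard = k

theorem isRegularSetOfGroup_iff [Finite G] {H : Subgroup G} (hH : H ≠ ⊤) {k : ℕ} :
    IsRegularSetOfGroup G H k ↔ ∃ S, H.IsRegularConnectionSet S k := by
  have nbrs : ∀ {S : Set G}, (1 : G) ∉ S → (∀ s ∈ S, s⁻¹ ∈ S) → ∀ v,
      {u | (cayley S).Adj v u ∧ u ∈ (H : Set G)} = {u | u ∈ H ∧ u * v⁻¹ ∈ S} :=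
    fun hS1 hS v => by ext u; simp [cayley_adj_iff_s16 hS1 hS, and_comm]
  constructor
  · rintro ⟨S, hS1, hS, -, -, hin, hout⟩
    refine ⟨S, hS, Set.disjoint_left.2 fun h hh hhS => ?_, fun x hx => ?_⟩
    · have h0 := hin 1 H.one_mem
      rw [nbrs hS1 hS, Set.ncard_eq_zero (Set.toFinite _), Set.eq_empty_iff_forall_notMem] at h0
      exact h0 h ⟨hh, by simpa using hhS⟩
    · have h := hout x⁻¹ (by simpa using hx)
      rwa [nbrs hS1 hS, inv_inv] at h
  · rintro ⟨S, hS, hHS, hcount⟩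
    have hS1 : (1 : G) ∉ S := Set.disjoint_left.1 hHS H.one_mem
    refine ⟨S, hS1, hS, ⟨1, H.one_mem⟩, by simpa using hH, fun v hv => ?_, fun v hv => ?_⟩
    · rw [nbrs hS1 hS, Set.ncard_eq_zero (Set.toFinite _)]
      exact Set.eq_empty_of_forall_notMem fun u ⟨hu, huS⟩ =>
        Set.disjoint_left.1 hHS (H.mul_mem hu (H.inv_mem hv)) huS
    · rw [nbrs hS1 hS]
      exact hcount _ (by simpa using hv)

/-- `u ↦ x⁻¹ * u⁻¹ * x⁻¹` is an involution of this set, and a fixed point `u` would make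
`u * x ∉ H` an involution. -/
theorem even_ncard_setOf_mul_mem [Finite G] {H : Subgroup G} {S : Set G}
    (hS : ∀ s ∈ S, s⁻¹ ∈ S) {x : G} (hx : x ∉ H) (hxH : ∀ h ∈ H, x * h * x ∈ H)
    (hH : ∀ g : G, g ^ 2 = 1 → g ∈ H) : Even {u | u ∈ H ∧ u * x ∈ S}.ncard := by
  refine Set.even_ncard_of_involution (Set.toFinite _) (fun u => x⁻¹ * u⁻¹ * x⁻¹)
    (fun u ⟨hu, huS⟩ => ⟨?_, ?_⟩) (fun u _ => by group) (fun u ⟨hu, _⟩ hfix => hx ?_)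
  · simpa [mul_assoc] using H.inv_mem (hxH u hu)
  · simpa [mul_assoc] using hS _ huS
  · have hxux : x * u * x = u⁻¹ :=
      calc x * u * x = x * (x⁻¹ * u⁻¹ * x⁻¹) * x := by rw [hfix]
        _ = u⁻¹ := by group
    have hsq : (u * x) ^ 2 = 1 := by
      calc (u * x) ^ 2 = u * (x * u * x) := by rw [sq]; group
        _ = 1 := by rw [hxux, mul_inv_cancel]
    exact (H.mul_mem_cancel_left hu).1 (hH _ hsq)

end Subgroup

namespace QuaternionGroup

variable {n : ℕ} {d k : ℕ}

theorem inv_a (i : ZMod (2 * n)) : (a i)⁻¹ = a (-i) := rfl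

theorem inv_xa (i : ZMod (2 * n)) : (xa i)⁻¹ = xa ((n : ZMod (2 * n)) + i) := rfl

theorem a_pow (i : ZMod (2 * n)) (k : ℕ) : a i ^ k = a ((k : ZMod (2 * n)) * i) := by
  induction k with
  | zero => rw [pow_zero, Nat.cast_zero, zero_mul, a_zero]
  | succ k ih => rw [pow_succ, ih, a_mul_a]; push_cast; ring_nf

theorem natCast_add_self : (n : ZMod (2 * n)) + n = 0 := by
  rw [← Nat.cast_add, ← two_mul, ZMod.natCast_self]

theorem orderOf_a_eq_addOrderOf [NeZero n] (i : ZMod (2 * n)) : orderOf (a i) = addOrderOf i := by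
  rw [orderOf_a]
  conv_rhs => rw [← ZMod.natCast_zmod_val i]
  rw [ZMod.addOrderOf_coe _ (NeZero.ne _)]

theorem eq_one_or_eq_a_of_sq_eq_one [NeZero n] {g : QuaternionGroup n} (hg : g ^ 2 = 1) :
    g = 1 ∨ g = a n := by
  cases g with
  | a i =>
    rw [sq, a_mul_a, one_def, a.injEq] at hg
    rcases (ZMod.neg_eq_self_iff_of_two_mul i).1 (neg_eq_of_add_eq_zero_right hg) with rfl | rfl
    · exact Or.inl one_def.symm
    · exact Or.inr rfl
  | xa i =>
    rw [xa_sq, one_def, a.injEq, CharP.cast_eq_zero_iff (ZMod (2 * n)) (2 * n)] at hg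
    exact absurd (Nat.le_of_dvd (NeZero.pos n) hg) (by have := NeZero.pos n; omega)

def ofSets (A X : Set (ZMod (2 * n))) : Set (QuaternionGroup n) :=
  {g | match g with
    | a i => i ∈ A
    | xa i => i ∈ X}

@[simp] theorem a_mem_ofSets {A X : Set (ZMod (2 * n))} {i : ZMod (2 * n)} :
    a i ∈ ofSets A X ↔ i ∈ A := Iff.rfl

@[simp] theorem xa_mem_ofSets {A X : Set (ZMod (2 * n))} {i : ZMod (2 * n)} :
    xa i ∈ ofSets A X ↔ i ∈ X := Iff.rfl

theorem ncard_eq_ncard_preimage_a_add_ncard_preimage_xa [NeZero n]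
    (T : Set (QuaternionGroup n)) : T.ncard = (a ⁻¹' T).ncard + (xa ⁻¹' T).ncard := by
  have hT : T = a '' (a ⁻¹' T) ∪ xa '' (xa ⁻¹' T) := by
    ext (i | i) <;> simp
  conv_lhs => rw [hT]
  rw [Set.ncard_union_eq (by simp [Set.disjoint_left]),
    Set.ncard_image_of_injective _ fun _ _ => a.inj,
    Set.ncard_image_of_injective _ fun _ _ => xa.inj]

/-- `⟨a ^ d⟩`, described through residues modulo `d`. -/
def cyclicSubgroup (hd : d ∣ 2 * n) : Subgroup (QuaternionGroup n) where
  carrier := ofSets (ZMod.castHom hd (ZMod d) ⁻¹' {0}) ∅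
  one_mem' := by rw [one_def]; exact map_zero _
  mul_mem' := by
    rintro (i | i) (j | j) hi hj <;>
      simp_all only [a_mul_a, a_mem_ofSets, xa_mem_ofSets, Set.mem_preimage,
        Set.mem_singleton_iff, map_add, add_zero, Set.mem_empty_iff_false]
  inv_mem' := by
    rintro (i | i) hi <;>
      simp_all only [inv_a, a_mem_ofSets, xa_mem_ofSets, Set.mem_preimage,
        Set.mem_singleton_iff, map_neg, neg_zero, Set.mem_empty_iff_false]

/-- `⟨a ^ d, xa c⟩`, where `r` is the residue of `c` modulo `d`. -/
def dicyclicSubgroup (hd : d ∣ n) (r : ZMod d) : Subgroup (QuaternionGroup n) where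
  carrier := ofSets (ZMod.castHom (hd.mul_left 2) (ZMod d) ⁻¹' {0})
    (ZMod.castHom (hd.mul_left 2) (ZMod d) ⁻¹' {r})
  one_mem' := by rw [one_def]; exact map_zero _
  mul_mem' := by
    have hn : (n : ZMod d) = 0 := (CharP.cast_eq_zero_iff (ZMod d) d n).2 hd
    rintro (i | i) (j | j) hi hj <;>
      simp_all only [a_mul_a, a_mul_xa, xa_mul_a, xa_mul_xa, a_mem_ofSets, xa_mem_ofSets,
        Set.mem_preimage, Set.mem_singleton_iff, map_add, map_sub, map_natCast, add_zero,
        sub_zero, zero_add, sub_self]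
  inv_mem' := by
    have hn : (n : ZMod d) = 0 := (CharP.cast_eq_zero_iff (ZMod d) d n).2 hd
    rintro (i | i) hi <;>
      simp_all only [inv_a, inv_xa, a_mem_ofSets, xa_mem_ofSets, Set.mem_preimage,
        Set.mem_singleton_iff, map_neg, map_add, map_natCast, neg_zero, zero_add]

@[simp] theorem a_mem_cyclicSubgroup (hd : d ∣ 2 * n) {i : ZMod (2 * n)} :
    a i ∈ cyclicSubgroup hd ↔ ZMod.castHom hd (ZMod d) i = 0 := Iff.rfl

@[simp] theorem xa_notMem_cyclicSubgroup (hd : d ∣ 2 * n) {i : ZMod (2 * n)} :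
    xa i ∉ cyclicSubgroup hd := id

@[simp] theorem a_mem_dicyclicSubgroup (hd : d ∣ n) {r : ZMod d} {i : ZMod (2 * n)} :
    a i ∈ dicyclicSubgroup hd r ↔ ZMod.castHom (hd.mul_left 2) (ZMod d) i = 0 := Iff.rfl

@[simp] theorem xa_mem_dicyclicSubgroup (hd : d ∣ n) {r : ZMod d} {i : ZMod (2 * n)} :
    xa i ∈ dicyclicSubgroup hd r ↔ ZMod.castHom (hd.mul_left 2) (ZMod d) i = r := Iff.rfl

theorem closure_a_eq_cyclicSubgroup [NeZero n] (hd : d ∣ 2 * n) :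
    Subgroup.closure {a (d : ZMod (2 * n))} = cyclicSubgroup hd := by
  have hdd : ZMod.castHom hd (ZMod d) d = 0 := by rw [map_natCast, ZMod.natCast_self]
  refine le_antisymm ((Subgroup.closure_le _).2 (by simp [hdd])) fun g hg => ?_
  obtain ⟨i, rfl⟩ : ∃ i, g = a i := by
    cases g with
    | a i => exact ⟨i, rfl⟩
    | xa i => exact absurd hg (xa_notMem_cyclicSubgroup hd)
  rw [a_mem_cyclicSubgroup, ZMod.castHom_apply, ZMod.cast_eq_val,
    CharP.cast_eq_zero_iff (ZMod d) d] at hg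
  obtain ⟨q, hq⟩ := hg
  have hi : a i = a (d : ZMod (2 * n)) ^ q := by
    rw [a_pow, ← Nat.cast_mul, Nat.mul_comm q d, ← hq, ZMod.natCast_zmod_val]
  rw [hi]
  exact Subgroup.pow_mem _ (Subgroup.subset_closure (Set.mem_singleton _)) q

theorem closure_a_xa_eq_dicyclicSubgroup [NeZero n] (hd : d ∣ n) (c : ZMod (2 * n)) :
    Subgroup.closure {a (d : ZMod (2 * n)), xa c} =
      dicyclicSubgroup hd (ZMod.castHom (hd.mul_left 2) (ZMod d) c) := by
  refine le_antisymm ((Subgroup.closure_le _).2 ?_) fun g hg => ?_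
  · have hdd : ZMod.castHom (hd.mul_left 2) (ZMod d) d = 0 := by
      rw [map_natCast, ZMod.natCast_self]
    simp [Set.insert_subset_iff, hdd]
  have hcyc : cyclicSubgroup (hd.mul_left 2) ≤ Subgroup.closure {a (d : ZMod (2 * n)), xa c} := by
    rw [← closure_a_eq_cyclicSubgroup]
    exact Subgroup.closure_mono (Set.singleton_subset_iff.2 (Set.mem_insert _ _))
  cases g with
  | a i => exact hcyc hg
  | xa i =>
    have hxa : xa i = a (c - i) * xa c := by rw [a_mul_xa, sub_sub_cancel]
    rw [hxa]
    refine Subgroup.mul_mem _ (hcyc ?_) (Subgroup.subset_closure (by simp))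
    rw [a_mem_cyclicSubgroup, map_sub, sub_eq_zero]
    exact ((xa_mem_dicyclicSubgroup hd).1 hg).symm

/-- The rotations in `H` are the `a i` with `i` in a subgroup of `ZMod (2 * n)`, which pulls
back to a subgroup `d ℤ` of `ℤ`. -/
theorem exists_forall_a_mem_iff (H : Subgroup (QuaternionGroup n)) :
    ∃ d, ∃ hd : d ∣ 2 * n, ∀ i, a i ∈ H ↔ ZMod.castHom hd (ZMod d) i = 0 := by
  let L : AddSubgroup ℤ :=
    { carrier := {z | a (z : ZMod (2 * n)) ∈ H}
      zero_mem' := by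
        change a ((0 : ℤ) : ZMod (2 * n)) ∈ H
        rw [Int.cast_zero, a_zero]
        exact H.one_mem
      add_mem' := fun hx hy => by simpa [a_mul_a] using H.mul_mem hx hy
      neg_mem' := fun hx => by simpa [inv_a] using H.inv_mem hx }
  obtain ⟨z, hz⟩ := Int.subgroup_cyclic L
  have hmem : ∀ w : ℤ, a (w : ZMod (2 * n)) ∈ H ↔ (z.natAbs : ℤ) ∣ w := fun w => by
    rw [Int.natAbs_dvd, ← Int.mem_zmultiples_iff, AddSubgroup.zmultiples_eq_closure, ← hz]
    rfl
  have hd : z.natAbs ∣ 2 * n := by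
    have h := (hmem (2 * n : ℕ)).1 (by
      rw [Int.cast_natCast, ZMod.natCast_self, a_zero]
      exact H.one_mem)
    exact_mod_cast h
  refine ⟨z.natAbs, hd, fun i => ?_⟩
  obtain ⟨w, rfl⟩ := ZMod.intCast_surjective i
  rw [hmem, map_intCast, CharP.intCast_eq_zero_iff (ZMod z.natAbs) z.natAbs]

theorem eq_cyclicSubgroup_or_eq_dicyclicSubgroup [NeZero n] (H : Subgroup (QuaternionGroup n)) :
    (∃ d, ∃ hd : d ∣ 2 * n, H = cyclicSubgroup hd) ∨
      ∃ d, ∃ hd : d ∣ n, ∃ r, H = dicyclicSubgroup hd r := by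
  obtain ⟨d, hd, hH⟩ := exists_forall_a_mem_iff H
  by_cases hx : ∃ c, xa c ∈ H
  · obtain ⟨c, hc⟩ := hx
    have hdn : d ∣ n := by
      have h := (hH n).1 (xa_sq c ▸ H.pow_mem hc 2)
      rwa [map_natCast, CharP.cast_eq_zero_iff (ZMod d) d] at h
    refine Or.inr ⟨d, hdn, ZMod.castHom hd (ZMod d) c, ?_⟩
    ext (i | i)
    · exact hH i
    · have hxa : xa i = a (c - i) * xa c := by rw [a_mul_xa, sub_sub_cancel]
      rw [xa_mem_dicyclicSubgroup, hxa, H.mul_mem_cancel_right hc, hH, map_sub, sub_eq_zero,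
        eq_comm]
  · simp only [not_exists] at hx
    refine Or.inl ⟨d, hd, ?_⟩
    ext (i | i)
    · exact hH i
    · exact iff_of_false (hx i) (xa_notMem_cyclicSubgroup hd)

section Finite

variable [NeZero n] {S : Set (QuaternionGroup n)}

theorem card_cyclicSubgroup (hd : d ∣ 2 * n) :
    Nat.card (cyclicSubgroup hd) = addOrderOf (d : ZMod (2 * n)) := by
  rw [← closure_a_eq_cyclicSubgroup, ← Subgroup.zpowers_eq_closure, Nat.card_zpowers,
    orderOf_a_eq_addOrderOf]

theorem ncard_fiber_eq_card_cyclicSubgroup (hd : d ∣ 2 * n) (r : ZMod d) :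
    (ZMod.castHom hd (ZMod d) ⁻¹' {r}).ncard = Nat.card (cyclicSubgroup hd) := by
  rw [ncard_fiber_eq_ncard_ker (ZMod.castHom_surjective hd), ← SetLike.coe_sort_coe,
    Nat.card_coe_set_eq, ncard_eq_ncard_preimage_a_add_ncard_preimage_xa]
  exact (congrArg (_ + ·) (Set.ncard_empty _)).symm

theorem card_dicyclicSubgroup (hd : d ∣ n) (r : ZMod d) :
    Nat.card (dicyclicSubgroup hd r) =
      2 * (ZMod.castHom (hd.mul_left 2) (ZMod d) ⁻¹' {0}).ncard := by
  rw [← SetLike.coe_sort_coe, Nat.card_coe_set_eq, ncard_eq_ncard_preimage_a_add_ncard_preimage_xa]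
  change (ZMod.castHom (hd.mul_left 2) (ZMod d) ⁻¹' {0}).ncard +
    (ZMod.castHom (hd.mul_left 2) (ZMod d) ⁻¹' {r}).ncard = _
  rw [ncard_fiber_eq_ncard_ker (ZMod.castHom_surjective _) r, ← two_mul]

section Counting

variable (A X : Set (ZMod (2 * n))) (j : ZMod (2 * n))

theorem ncard_cyclicSubgroup_mul_a (hd : d ∣ 2 * n) :
    {u | u ∈ cyclicSubgroup hd ∧ u * a j ∈ ofSets A X}.ncard =
      (A ∩ ZMod.castHom hd (ZMod d) ⁻¹' {ZMod.castHom hd (ZMod d) j}).ncard := by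
  set ρ := ZMod.castHom hd (ZMod d)
  have ha : a ⁻¹' {u | u ∈ cyclicSubgroup hd ∧ u * a j ∈ ofSets A X} =
      (· + j) ⁻¹' A ∩ ρ ⁻¹' {0} := by
    ext i
    simp only [Set.mem_preimage, Set.mem_ofPred_eq, a_mul_a, a_mem_cyclicSubgroup, a_mem_ofSets,
      Set.mem_inter_iff, Set.mem_singleton_iff, and_comm, ρ]
  have hxa : xa ⁻¹' {u | u ∈ cyclicSubgroup hd ∧ u * a j ∈ ofSets A X} = ∅ := by
    ext i
    simp only [Set.mem_preimage, Set.mem_ofPred_eq, xa_notMem_cyclicSubgroup, false_and,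
      Set.mem_empty_iff_false]
  rw [ncard_eq_ncard_preimage_a_add_ncard_preimage_xa, ha, hxa, Set.ncard_empty, add_zero,
    ncard_preimage_inter_fiber (AddGroup.addRight_bijective j) (add_left_injective (ρ j))
      (fun x => map_add ρ x j), zero_add]

theorem ncard_cyclicSubgroup_mul_xa (hd : d ∣ 2 * n) :
    {u | u ∈ cyclicSubgroup hd ∧ u * xa j ∈ ofSets A X}.ncard =
      (X ∩ ZMod.castHom hd (ZMod d) ⁻¹' {ZMod.castHom hd (ZMod d) j}).ncard := by
  set ρ := ZMod.castHom hd (ZMod d)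
  have ha : a ⁻¹' {u | u ∈ cyclicSubgroup hd ∧ u * xa j ∈ ofSets A X} =
      (j - ·) ⁻¹' X ∩ ρ ⁻¹' {0} := by
    ext i
    simp only [Set.mem_preimage, Set.mem_ofPred_eq, a_mul_xa, a_mem_cyclicSubgroup, xa_mem_ofSets,
      Set.mem_inter_iff, Set.mem_singleton_iff, and_comm, ρ]
  have hxa : xa ⁻¹' {u | u ∈ cyclicSubgroup hd ∧ u * xa j ∈ ofSets A X} = ∅ := by
    ext i
    simp only [Set.mem_preimage, Set.mem_ofPred_eq, xa_notMem_cyclicSubgroup, false_and,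
      Set.mem_empty_iff_false]
  rw [ncard_eq_ncard_preimage_a_add_ncard_preimage_xa, ha, hxa, Set.ncard_empty, add_zero,
    ncard_preimage_inter_fiber (φ := (j - ·)) (Equiv.subLeft j).bijective sub_right_injective
      (fun x => map_sub ρ j x), sub_zero]

theorem ncard_dicyclicSubgroup_mul_a (hd : d ∣ n) (r : ZMod d) :
    {u | u ∈ dicyclicSubgroup hd r ∧ u * a j ∈ ofSets A X}.ncard =
      (A ∩ ZMod.castHom (hd.mul_left 2) (ZMod d) ⁻¹'
          {ZMod.castHom (hd.mul_left 2) (ZMod d) j}).ncard +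
        (X ∩ ZMod.castHom (hd.mul_left 2) (ZMod d) ⁻¹'
          {r + ZMod.castHom (hd.mul_left 2) (ZMod d) j}).ncard := by
  set ρ := ZMod.castHom (hd.mul_left 2) (ZMod d)
  have ha : a ⁻¹' {u | u ∈ dicyclicSubgroup hd r ∧ u * a j ∈ ofSets A X} =
      (· + j) ⁻¹' A ∩ ρ ⁻¹' {0} := by
    ext i
    simp only [Set.mem_preimage, Set.mem_ofPred_eq, a_mul_a, a_mem_dicyclicSubgroup, a_mem_ofSets,
      Set.mem_inter_iff, Set.mem_singleton_iff, and_comm, ρ]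
  have hxa : xa ⁻¹' {u | u ∈ dicyclicSubgroup hd r ∧ u * a j ∈ ofSets A X} =
      (· + j) ⁻¹' X ∩ ρ ⁻¹' {r} := by
    ext i
    simp only [Set.mem_preimage, Set.mem_ofPred_eq, xa_mul_a, xa_mem_dicyclicSubgroup,
      xa_mem_ofSets, Set.mem_inter_iff, Set.mem_singleton_iff, and_comm, ρ]
  have hρ : ∀ x, ρ (x + j) = ρ x + ρ j := fun x => map_add ρ x j
  rw [ncard_eq_ncard_preimage_a_add_ncard_preimage_xa, ha, hxa,
    ncard_preimage_inter_fiber (AddGroup.addRight_bijective j) (add_left_injective (ρ j)) hρ,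
    ncard_preimage_inter_fiber (AddGroup.addRight_bijective j) (add_left_injective (ρ j)) hρ,
    zero_add]

theorem ncard_dicyclicSubgroup_mul_xa (hd : d ∣ n) (r : ZMod d) :
    {u | u ∈ dicyclicSubgroup hd r ∧ u * xa j ∈ ofSets A X}.ncard =
      (X ∩ ZMod.castHom (hd.mul_left 2) (ZMod d) ⁻¹'
          {ZMod.castHom (hd.mul_left 2) (ZMod d) j}).ncard +
        (A ∩ ZMod.castHom (hd.mul_left 2) (ZMod d) ⁻¹'
          {ZMod.castHom (hd.mul_left 2) (ZMod d) j - r}).ncard := by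
  set ρ := ZMod.castHom (hd.mul_left 2) (ZMod d)
  have hn : ρ n = 0 := by rw [map_natCast]; exact (CharP.cast_eq_zero_iff (ZMod d) d n).2 hd
  have ha : a ⁻¹' {u | u ∈ dicyclicSubgroup hd r ∧ u * xa j ∈ ofSets A X} =
      (j - ·) ⁻¹' X ∩ ρ ⁻¹' {0} := by
    ext i
    simp only [Set.mem_preimage, Set.mem_ofPred_eq, a_mul_xa, a_mem_dicyclicSubgroup,
      xa_mem_ofSets, Set.mem_inter_iff, Set.mem_singleton_iff, and_comm, ρ]
  have hxa : xa ⁻¹' {u | u ∈ dicyclicSubgroup hd r ∧ u * xa j ∈ ofSets A X} =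
      ((n : ZMod (2 * n)) + j - ·) ⁻¹' A ∩ ρ ⁻¹' {r} := by
    ext i
    simp only [Set.mem_preimage, Set.mem_ofPred_eq, xa_mul_xa, xa_mem_dicyclicSubgroup,
      a_mem_ofSets, Set.mem_inter_iff, Set.mem_singleton_iff, and_comm, ρ]
  rw [ncard_eq_ncard_preimage_a_add_ncard_preimage_xa, ha, hxa,
    ncard_preimage_inter_fiber (φ := (j - ·)) (Equiv.subLeft j).bijective sub_right_injective
      (fun x => map_sub ρ j x),
    ncard_preimage_inter_fiber (φ := ((n : ZMod (2 * n)) + j - ·)) (Equiv.subLeft _).bijective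
      sub_right_injective       (fun x => map_sub ρ _ x), sub_zero, map_add, hn, zero_add]

end Counting

theorem odd_two_mul_div_of_isRegularConnectionSet (hd : d ∣ 2 * n)
    (hS : (cyclicSubgroup hd).IsRegularConnectionSet S k) (hk : Odd k) : Odd (2 * n / d) := by
  by_contra hm
  obtain ⟨q, hq⟩ := Nat.not_odd_iff_even.1 hm
  have hn : ZMod.castHom hd (ZMod d) n = 0 := by
    have h2n := Nat.div_mul_cancel hd
    rw [map_natCast, CharP.cast_eq_zero_iff (ZMod d) d]
    exact ⟨q, by rw [hq] at h2n; linarith⟩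
  have heven := Subgroup.even_ncard_setOf_mul_mem hS.1 (xa_notMem_cyclicSubgroup hd (i := 0))
    (fun h hh => ?_) fun g hg => ?_
  · rw [hS.2.2 _ (xa_notMem_cyclicSubgroup hd)] at heven
    exact Nat.not_even_iff_odd.2 hk heven
  · cases h with
    | a i =>
      rw [xa_mul_a, xa_mul_xa, zero_add, add_zero, a_mem_cyclicSubgroup, map_sub, hn,
        (a_mem_cyclicSubgroup hd).1 hh, sub_zero]
    | xa i => exact absurd hh (xa_notMem_cyclicSubgroup hd)
  · rcases eq_one_or_eq_a_of_sq_eq_one hg with rfl | rfl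
    · exact Subgroup.one_mem _
    · exact (a_mem_cyclicSubgroup hd).2 hn

theorem odd_of_isRegularConnectionSet (hd : d ∣ n) (r : ZMod d)
    (hS : (dicyclicSubgroup hd r).IsRegularConnectionSet S k) (hk : Odd k) : Odd d := by
  by_contra hde
  obtain ⟨e, rfl⟩ : 2 ∣ d := even_iff_two_dvd.1 (Nat.not_odd_iff_even.1 hde)
  set ρ := ZMod.castHom (hd.mul_left 2) (ZMod (2 * e))
  have he0 : 0 < e := Nat.pos_of_ne_zero fun he => NeZero.ne n (by simpa [he] using hd)
  have he : ρ e + ρ e = 0 := by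
    rw [← map_add, ← Nat.cast_add, ← two_mul, map_natCast, ZMod.natCast_self]
  have hn : ρ n = 0 := by rw [map_natCast]; exact (CharP.cast_eq_zero_iff _ (2 * e) n).2 hd
  have hx : a (e : ZMod (2 * n)) ∉ dicyclicSubgroup hd r := by
    rw [a_mem_dicyclicSubgroup, map_natCast, CharP.cast_eq_zero_iff (ZMod (2 * e)) (2 * e)]
    exact fun h => he0.ne' (Nat.eq_zero_of_dvd_of_lt h (by omega))
  have heven := Subgroup.even_ncard_setOf_mul_mem hS.1 hx (fun h hh => ?_) fun g hg => ?_
  · rw [hS.2.2 _ hx] at heven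
    exact Nat.not_even_iff_odd.2 hk heven
  · cases h with
    | a i =>
      rw [a_mul_a, a_mul_a, a_mem_dicyclicSubgroup, map_add, map_add,
        (a_mem_dicyclicSubgroup hd).1 hh, add_zero, he]
    | xa i => rwa [a_mul_xa, xa_mul_a, sub_add_cancel]
  · rcases eq_one_or_eq_a_of_sq_eq_one hg with rfl | rfl
    · exact Subgroup.one_mem _
    · exact (a_mem_dicyclicSubgroup hd).2 hn

/-- The only nonzero residue class modulo `t` fixed by negation is that of `n`; it receives
a progression `n + z t` instead of pairs. -/
theorem exists_neg_invariant_ncard_inter_fiber_of_odd_two_mul_div {t : ℕ} (ht : t ∣ 2 * n)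
    (hodd : Odd (2 * n / t)) (hk : Odd k) (hkH : k ≤ Nat.card (cyclicSubgroup ht)) :
    ∃ A : Set (ZMod (2 * n)), (∀ x ∈ A, -x ∈ A) ∧ (∀ x ∈ A, ZMod.castHom ht (ZMod t) x ≠ 0) ∧
      ∀ r ≠ 0, (A ∩ ZMod.castHom ht (ZMod t) ⁻¹' {r}).ncard = k := by
  set ρ := ZMod.castHom ht (ZMod t)
  have hn : ρ n ≠ 0 := by
    rw [map_natCast]
    exact ZMod.natCast_ne_zero_of_odd_two_mul_div hodd
  have hneg : ∀ r : ZMod t, -r = r ↔ r = 0 ∨ r = ρ n := by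
    rw [map_natCast]
    exact ZMod.neg_eq_self_iff_of_odd_two_mul_div ht hodd
  obtain ⟨B, hBneg, hBfix, hBcount⟩ := exists_invariant_ncard_inter_fiber ρ neg_involutive
    neg_involutive (map_neg ρ) (j := k) fun r => by rwa [ncard_fiber_eq_card_cyclicSubgroup]
  obtain ⟨C, hCneg, hCform, hCcard⟩ := exists_neg_invariant_ncard_eq
    (neg_eq_of_add_eq_zero_left natCast_add_self) _ hk (card_cyclicSubgroup ht ▸ hkH)
  have hC : C ⊆ ρ ⁻¹' {ρ n} := fun x hx => by
    obtain ⟨z, rfl⟩ := hCform x hx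
    simp only [Set.mem_preimage, Set.mem_singleton_iff, map_add, map_zsmul, map_natCast,
      ZMod.natCast_self, smul_zero, add_zero]
  refine ⟨B ∪ C, ?_, ?_, fun r hr => ?_⟩
  · rintro x (hx | hx)
    · exact Or.inl (hBneg x hx)
    · exact Or.inr (hCneg x hx)
  · rintro x (hx | hx) h0
    · exact hBfix x hx (by rw [h0, neg_zero])
    · exact hn ((hC hx).symm.trans h0)
  rw [Set.union_inter_distrib_right]
  by_cases hrn : r = ρ n
  · have hB : B ∩ ρ ⁻¹' {r} = ∅ := Set.eq_empty_of_forall_notMem fun x ⟨hxB, hx⟩ =>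
      hBfix x hxB ((hneg _).2 (Or.inr ((hx : ρ x = r).trans hrn)))
    rw [hB, Set.empty_union, Set.inter_eq_left.2 (hrn ▸ hC), hCcard]
  · have hC' : C ∩ ρ ⁻¹' {r} = ∅ := Set.eq_empty_of_forall_notMem fun x ⟨hxC, hx⟩ =>
      hrn ((hx : ρ x = r).symm.trans (hC hxC))
    rw [hC', Set.union_empty, hBcount]
    exact fun h => ((hneg _).1 h).elim hr hrn

theorem exists_isRegularConnectionSet_cyclicSubgroup {t : ℕ} (ht : t ∣ 2 * n)
    (hodd : Odd (2 * n / t)) (hk : Odd k) (hkH : k ≤ Nat.card (cyclicSubgroup ht)) :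
    ∃ S, (cyclicSubgroup ht).IsRegularConnectionSet S k := by
  set ρ := ZMod.castHom ht (ZMod t)
  have hn : ρ n ≠ 0 := by
    rw [map_natCast]
    exact ZMod.natCast_ne_zero_of_odd_two_mul_div hodd
  obtain ⟨A, hAneg, hA0, hAcount⟩ :=
    exists_neg_invariant_ncard_inter_fiber_of_odd_two_mul_div ht hodd hk hkH
  obtain ⟨X, hXinv, -, hXcount⟩ := exists_invariant_ncard_inter_fiber ρ
    (f := ((n : ZMod (2 * n)) + ·)) (g := (ρ n + ·))
    (fun x => by dsimp only; rw [← add_assoc, natCast_add_self, zero_add])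
    (fun r => by dsimp only; rw [← add_assoc, ← map_add, natCast_add_self, map_zero, zero_add])
    (fun x => map_add ρ _ x) (j := k) fun r => by rwa [ncard_fiber_eq_card_cyclicSubgroup]
  refine ⟨ofSets A X, ?_, Set.disjoint_left.2 ?_, ?_⟩
  · rintro (i | i) hi
    · exact hAneg i hi
    · exact hXinv i hi
  · rintro (i | i) hi hiS
    · exact hA0 i hiS hi
    · exact hi
  · rintro (j | j) hj
    · rw [ncard_cyclicSubgroup_mul_a, hAcount _ hj]
    · rw [ncard_cyclicSubgroup_mul_xa, hXcount]
      simpa using hn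

theorem exists_isRegularConnectionSet_dicyclicSubgroup {t : ℕ} (ht : t ∣ n) (hodd : Odd t)
    (r : ZMod t) (hkH : k ≤ Nat.card (dicyclicSubgroup ht r)) :
    ∃ S, (dicyclicSubgroup ht r).IsRegularConnectionSet S k := by
  rw [card_dicyclicSubgroup] at hkH
  set ρ := ZMod.castHom (ht.mul_left 2) (ZMod t)
  set M := (ρ ⁻¹' {0}).ncard
  have hfib : ∀ s, (ρ ⁻¹' {s}).ncard = M := ncard_fiber_eq_ncard_ker (ZMod.castHom_surjective _)
  have hn : ρ n = 0 := by rw [map_natCast]; exact (CharP.cast_eq_zero_iff _ t n).2 ht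
  set X : Set (ZMod (2 * n)) := {i | M < k ∧ ρ i ≠ r}
  have hXcount : ∀ s ≠ r, (X ∩ ρ ⁻¹' {s}).ncard = if M < k then M else 0 := fun s hs => by
    split_ifs with hMk
    · have hsub : ρ ⁻¹' {s} ⊆ X := fun i (hi : ρ i = s) => ⟨hMk, hi ▸ hs⟩
      rw [Set.inter_eq_right.2 hsub, hfib]
    · rw [Set.ncard_eq_zero (Set.toFinite _)]
      exact Set.eq_empty_of_forall_notMem fun i ⟨⟨h, _⟩, _⟩ => hMk h
  obtain ⟨A, hAneg, hAfix, hAcount⟩ := exists_invariant_ncard_inter_fiber ρ neg_involutive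
    neg_involutive (map_neg ρ) (j := if M < k then k - M else k)
    (fun s => by rw [hfib]; split_ifs <;> omega)
  have hAcount' : ∀ s ≠ 0, (A ∩ ρ ⁻¹' {s}).ncard = if M < k then k - M else k :=
    fun s hs => hAcount s fun h => hs (ZMod.eq_zero_of_neg_eq_self hodd h)
  have htotal : (if M < k then k - M else k) + (if M < k then M else 0) = k := by
    split_ifs <;> omega
  refine ⟨ofSets A X, ?_, Set.disjoint_left.2 ?_, ?_⟩
  · rintro (i | i) hi
    · exact hAneg i hi
    · exact ⟨hi.1, by rw [map_add, hn, zero_add]; exact hi.2⟩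
  · rintro (i | i) hi hiS
    · have hi : ρ i = 0 := hi
      exact hAfix i hiS (by rw [hi, neg_zero])
    · exact hiS.2 hi
  · rintro (j | j) hj
    · rw [ncard_dicyclicSubgroup_mul_a, hAcount' _ hj, hXcount _ fun h => hj (add_eq_left.1 h)]
      exact htotal
    · rw [ncard_dicyclicSubgroup_mul_xa, hXcount _ hj, hAcount' _ (sub_ne_zero.2 hj), add_comm]
      exact htotal

end Finite

end QuaternionGroup

theorem stmt16_general (n : ℕ) (hn : 2 ≤ n) (H : Subgroup (QuaternionGroup n)) (hprop : H ≠ ⊤)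
    (k : ℕ) (hk2 : k ≤ Nat.card H) (hodd : Odd k) :
    IsRegularSetOfGroup (QuaternionGroup n) (H : Set (QuaternionGroup n)) k ↔
      ((∃ t : ℕ, t ∣ 2 * n ∧ Odd ((2 * n) / t) ∧
          H = Subgroup.closure {QuaternionGroup.a (t : ZMod (2 * n))}) ∨
       (∃ t s : ℕ, t ∣ 2 * n ∧ Odd t ∧ s ≤ t - 1 ∧
          H = Subgroup.closure
            {QuaternionGroup.a (t : ZMod (2 * n)),
             QuaternionGroup.a (s : ZMod (2 * n)) * QuaternionGroup.xa 0})) := by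
  have : NeZero n := ⟨by omega⟩
  rw [Subgroup.isRegularSetOfGroup_iff hprop]
  constructor
  · rintro ⟨S, hS⟩
    rcases QuaternionGroup.eq_cyclicSubgroup_or_eq_dicyclicSubgroup H with
      ⟨d, hd, rfl⟩ | ⟨d, hd, r, rfl⟩
    · exact Or.inl ⟨d, hd, QuaternionGroup.odd_two_mul_div_of_isRegularConnectionSet hd hS hodd,
        (QuaternionGroup.closure_a_eq_cyclicSubgroup hd).symm⟩
    · have hdo := QuaternionGroup.odd_of_isRegularConnectionSet hd r hS hodd
      have : NeZero d := ⟨hdo.pos.ne'⟩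
      refine Or.inr ⟨d, (-r).val, hd.mul_left 2, hdo, Nat.le_sub_one_of_lt (ZMod.val_lt _), ?_⟩
      rw [QuaternionGroup.a_mul_xa, QuaternionGroup.closure_a_xa_eq_dicyclicSubgroup hd, zero_sub,
        map_neg, map_natCast, ZMod.natCast_zmod_val, neg_neg]
  · rintro (⟨t, ht, hto, rfl⟩ | ⟨t, s, ht, hto, -, rfl⟩)
    · rw [QuaternionGroup.closure_a_eq_cyclicSubgroup ht] at hk2 ⊢
      exact QuaternionGroup.exists_isRegularConnectionSet_cyclicSubgroup ht hto hodd hk2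
    · have htn : t ∣ n := hto.coprime_two_right.dvd_of_dvd_mul_left ht
      rw [QuaternionGroup.a_mul_xa, QuaternionGroup.closure_a_xa_eq_dicyclicSubgroup htn] at hk2 ⊢
      exact QuaternionGroup.exists_isRegularConnectionSet_dicyclicSubgroup htn hto _ hk2

theorem stmt16 (n : ℕ) (hn : 2 ≤ n) (H : Subgroup (QuaternionGroup n)) (hprop : H ≠ ⊤)
    (k : ℕ) (hk1 : 1 ≤ k) (hk2 : k ≤ Nat.card H) (hodd : Odd k) :
    IsRegularSetOfGroup (QuaternionGroup n) (H : Set (QuaternionGroup n)) k ↔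
      ((∃ t : ℕ, t ∣ 2 * n ∧ Odd ((2 * n) / t) ∧
          H = Subgroup.closure {QuaternionGroup.a (t : ZMod (2 * n))}) ∨
       (∃ t s : ℕ, t ∣ 2 * n ∧ Odd t ∧ s ≤ t - 1 ∧
          H = Subgroup.closure
            {QuaternionGroup.a (t : ZMod (2 * n)),
             QuaternionGroup.a (s : ZMod (2 * n)) * QuaternionGroup.xa 0})) :=
  stmt16_general n hn H hprop k hk2 hodd
end
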